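/- arXiv:2010.13151 — 2 statements merged into one kernel-verified Lean document; each statement's English description precedes it below -/
import Mathlib

section
/- Let p ≥ 2 be a real number and let a, b, c, d be reals with a ≥ b > 0, 0 ≤ c < a, 0 ≤ d < b. Then |(a^p − c^p)/a^{p−1} − (b^p − d^p)/b^{p−1}| ≤ p(a − b) + p|c − d|. -/
/-!
Write `F a c = (a ^ p - c ^ p) / a ^ (p - 1)` and pass through `F a d`. By the mean value bound
`|c ^ p - d ^ p| ≤ p * a ^ (p - 1) * |c - d|` for `c, d ∈ [0, a]`, `F a` is `p`-Lipschitz. For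
fixed `d ≤ b ≤ a`, `F a d - F b d = (a - b) + d ^ p * (b ^ (1 - p) - a ^ (1 - p))` is
nonnegative and increasing in `d`, so at most its value `(a ^ p - b ^ p) / a ^ (p - 1) ≤ p * (a - b)`
at `d = b`.
-/

theorem Real.rpow_eq_rpow_sub_one_mul {x : ℝ} (hx : x ≠ 0) (y : ℝ) :
    x ^ y = x ^ (y - 1) * x := by
  rw [← Real.rpow_add_one hx, sub_add_cancel]

theorem Real.rpow_sub_rpow_le_mul_rpow_mul_sub {q u v : ℝ} (hq : 1 ≤ q) (hu : 0 ≤ u)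
    (huv : u ≤ v) : v ^ q - u ^ q ≤ q * v ^ (q - 1) * (v - u) := by
  obtain rfl | hv := (hu.trans huv).eq_or_lt
  · obtain rfl := le_antisymm huv hu
    simp
  have bernoulli := one_add_mul_self_le_rpow_one_add (s := u / v - 1)
    (by linarith [div_nonneg hu hv.le]) hq
  rw [add_sub_cancel, Real.div_rpow hu hv.le, le_div_iff₀ (by positivity),
    Real.rpow_eq_rpow_sub_one_mul hv.ne' q] at bernoulli
  rw [Real.rpow_eq_rpow_sub_one_mul hv.ne' q]
  field_simp at bernoulli
  linarith

theorem Real.abs_rpow_sub_rpow_le {q u v M : ℝ} (hq : 1 ≤ q) (hu : 0 ≤ u) (hv : 0 ≤ v)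
    (huM : u ≤ M) (hvM : v ≤ M) : |u ^ q - v ^ q| ≤ q * M ^ (q - 1) * |u - v| := by
  wlog huv : u ≤ v generalizing u v
  · rw [abs_sub_comm, abs_sub_comm u]
    exact this hv hu hvM huM (le_of_not_ge huv)
  rw [abs_sub_comm, abs_of_nonneg (sub_nonneg.2 (Real.rpow_le_rpow hu huv (by linarith))),
    abs_sub_comm, abs_of_nonneg (sub_nonneg.2 huv)]
  calc v ^ q - u ^ q ≤ q * v ^ (q - 1) * (v - u) :=
        Real.rpow_sub_rpow_le_mul_rpow_mul_sub hq hu huv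
    _ ≤ q * M ^ (q - 1) * (v - u) := by gcongr

theorem abs_div_rpow_sub_one_sub_div_rpow_sub_one_le_mul_abs_sub {p a c d : ℝ} (hp : 1 ≤ p)
    (ha : 0 < a) (hc : 0 ≤ c) (hd : 0 ≤ d) (hca : c ≤ a) (hda : d ≤ a) :
    |(a ^ p - c ^ p) / a ^ (p - 1) - (a ^ p - d ^ p) / a ^ (p - 1)| ≤ p * |c - d| := by
  have hA : 0 < a ^ (p - 1) := by positivity
  rw [← sub_div, sub_sub_sub_cancel_left, abs_div, abs_of_pos hA, div_le_iff₀ hA, abs_sub_comm,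
    mul_right_comm]
  exact Real.abs_rpow_sub_rpow_le hp hc hd hca hda

theorem abs_div_rpow_sub_one_sub_div_rpow_sub_one_le_mul_sub {p a b d : ℝ} (hp : 1 ≤ p)
    (hb : 0 < b) (hd : 0 ≤ d) (hdb : d ≤ b) (hba : b ≤ a) :
    |(a ^ p - d ^ p) / a ^ (p - 1) - (b ^ p - d ^ p) / b ^ (p - 1)| ≤ p * (a - b) := by
  have ha : 0 < a := hb.trans_le hba
  have hmean := Real.rpow_sub_rpow_le_mul_rpow_mul_sub hp hb.le hba
  have hdpb : d ^ p ≤ b ^ p := Real.rpow_le_rpow hd hdb (by linarith)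
  rw [Real.rpow_eq_rpow_sub_one_mul ha.ne' p] at hmean ⊢
  rw [Real.rpow_eq_rpow_sub_one_mul hb.ne' p] at hmean hdpb ⊢
  set A := a ^ (p - 1)
  set B := b ^ (p - 1)
  have hA : 0 < A := by positivity
  have hB : 0 < B := by positivity
  have hBA : B ≤ A := Real.rpow_le_rpow hb.le hba (by linarith)
  rw [div_sub_div _ _ hA.ne' hB.ne', abs_le, le_div_iff₀ (by positivity),
    div_le_iff₀ (by positivity)]
  constructor
  · have hAB : 0 ≤ (a - b) * (A * B) := mul_nonneg (sub_nonneg.2 hba) (by positivity)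
    nlinarith [mul_nonneg (Real.rpow_nonneg hd p) (sub_nonneg.2 hBA)]
  · nlinarith [mul_le_mul_of_nonneg_right hdpb (sub_nonneg.2 hBA),
      mul_le_mul_of_nonneg_right hmean hB.le]

/-- an elementary inequality for real powers `p ≥ 2`. -/
theorem abs_div_rpow_sub_div_rpow_le
    (p a b c d : ℝ) (hp : 2 ≤ p) (hba : b ≤ a) (hb : 0 < b)
    (hc : 0 ≤ c) (hca : c < a) (hd : 0 ≤ d) (hdb : d < b) :
    |(a ^ p - c ^ p) / a ^ (p - 1) - (b ^ p - d ^ p) / b ^ (p - 1)| ≤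
      p * (a - b) + p * |c - d| := by
  have hp1 : 1 ≤ p := by linarith
  have hc_step := abs_div_rpow_sub_one_sub_div_rpow_sub_one_le_mul_abs_sub hp1
    (hb.trans_le hba) hc hd hca.le (hdb.le.trans hba)
  have ha_step := abs_div_rpow_sub_one_sub_div_rpow_sub_one_le_mul_sub hp1 hb hd hdb.le hba
  linarith [abs_sub_le ((a ^ p - c ^ p) / a ^ (p - 1)) ((a ^ p - d ^ p) / a ^ (p - 1))
    ((b ^ p - d ^ p) / b ^ (p - 1))]
end

section
/- Let p ≥ 2 be a real number and set j_p(t) = |t|^{p−2} t for t ∈ ℝ. Let a, b, c, d > 0 be reals and set φ₁ = (a^p − c^p)⁺ and φ₂ = (b^p − d^p)⁺ (positive parts). Then j_p(c − d)·(φ₁/c^{p−1} − φ₂/d^{p−1}) ≤ j_p(a − b)·(φ₁/a^{p−1} − φ₂/b^{p−1}). -/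
/-!
Write `j t = |t|^(p-2) t`. If `a ≤ c` then `φ₁ = 0`, and if `b ≤ d` then `φ₂ = 0`. When exactly
one of them vanishes, the inequality reduces to comparing `j((a-b)/b)` with `j((c-d)/d)` (or the
analogue with `a, c`), using `j t / s^(p-1) = j (t/s)` and the monotonicity of `j`. When neither
vanishes, the positive parts can be dropped, and the inequality is the sum of two instances of the
discrete Picone inequality `j(u₁-u₂) (v₁^p/u₁^(p-1) - v₂^p/u₂^(p-1)) ≤ |v₁-v₂|^p`, since
`j t * t = |t|^p`. Picone's inequality itself follows from Radon's inequality
`(x+y)^p/(s+t)^(p-1) ≤ x^p/s^(p-1) + y^p/t^(p-1)`, which is Jensen's inequality for `x ↦ x^p`.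
-/

open Real Set

noncomputable def jp (p t : ℝ) : ℝ := |t| ^ (p - 2) * t

section jp

variable {p : ℝ}

lemma jp_zero (p : ℝ) : jp p 0 = 0 := by simp [jp]

lemma jp_neg (p t : ℝ) : jp p (-t) = -jp p t := by simp [jp]

lemma jp_of_pos {t : ℝ} (ht : 0 < t) : jp p t = t ^ (p - 1) := by
  rw [jp, abs_of_pos ht, ← rpow_add_one ht.ne']
  ring_nf

lemma jp_nonneg {t : ℝ} (ht : 0 ≤ t) : 0 ≤ jp p t := by
  unfold jp; positivity

lemma jp_div (t : ℝ) {s : ℝ} (hs : 0 < s) : jp p t / s ^ (p - 1) = jp p (t / s) := by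
  rw [jp, jp, abs_div, abs_of_pos hs, div_rpow (abs_nonneg t) hs.le, show p - 1 = p - 2 + 1 by ring,
    rpow_add_one hs.ne']
  field_simp

lemma jp_mul_self (hp : 0 < p) (t : ℝ) : jp p t * t = |t| ^ p := by
  rcases eq_or_ne t 0 with rfl | ht
  · simp [jp, zero_rpow hp.ne']
  · have ht' : |t| ≠ 0 := abs_ne_zero.2 ht
    rw [jp, mul_assoc, ← abs_mul_abs_self, ← mul_assoc, ← rpow_add_one ht', ← rpow_add_one ht',
      show p - 2 + 1 + 1 = p by ring]

lemma jp_monotone (hp : 1 ≤ p) : Monotone (jp p) := by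
  have hIci : MonotoneOn (jp p) (Ici 0) := by
    intro s hs t ht hst
    rcases (mem_Ici.1 hs).eq_or_lt with rfl | hs
    · simpa [jp_zero] using jp_nonneg ht
    · rw [jp_of_pos hs, jp_of_pos (hs.trans_le hst)]
      exact rpow_le_rpow hs.le hst (by linarith)
  have hIic : MonotoneOn (jp p) (Iic 0) := by
    intro s hs t ht hst
    have := hIci (mem_Ici.2 (neg_nonneg.2 ht)) (mem_Ici.2 (neg_nonneg.2 hs)) (neg_le_neg hst)
    rwa [jp_neg, jp_neg, neg_le_neg_iff] at this
  exact hIic.Iic_union_Ici hIci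

end jp

lemma mul_div_rpow_eq {w z : ℝ} (p : ℝ) (hw : 0 < w) (hz : 0 ≤ z) :
    w * (z / w) ^ p = z ^ p / w ^ (p - 1) := by
  rw [div_rpow hz hw.le, rpow_sub_one hw.ne']
  field_simp

lemma radon_inequality {p x y s t : ℝ} (hp : 1 ≤ p) (hx : 0 ≤ x) (hy : 0 ≤ y) (hs : 0 < s)
    (ht : 0 < t) :
    (x + y) ^ p / (s + t) ^ (p - 1) ≤ x ^ p / s ^ (p - 1) + y ^ p / t ^ (p - 1) := by
  have hst : 0 < s + t := by positivity
  set w₁ := s / (s + t)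
  set w₂ := t / (s + t)
  have hw₁ : 0 < w₁ := by positivity
  have hw₂ : 0 < w₂ := by positivity
  have hjensen := (convexOn_rpow hp).2 (mem_Ici.2 (div_nonneg hx hw₁.le))
    (mem_Ici.2 (div_nonneg hy hw₂.le)) hw₁.le hw₂.le (by rw [← add_div, div_self hst.ne'])
  simp only [smul_eq_mul, mul_div_cancel₀ _ hw₁.ne', mul_div_cancel₀ _ hw₂.ne',
    mul_div_rpow_eq p hw₁ hx, mul_div_rpow_eq p hw₂ hy, w₁, w₂,
    div_rpow hs.le hst.le, div_rpow ht.le hst.le] at hjensen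
  rw [div_le_iff₀ (rpow_pos_of_pos hst _)]
  convert hjensen using 1
  field_simp

lemma discrete_picone_of_lt {p u₁ u₂ v₁ v₂ : ℝ} (hp : 1 ≤ p) (hu₂ : 0 < u₂) (hu : u₂ < u₁)
    (hv₁ : 0 ≤ v₁) (hv₂ : 0 ≤ v₂) :
    jp p (u₁ - u₂) * (v₁ ^ p / u₁ ^ (p - 1) - v₂ ^ p / u₂ ^ (p - 1)) ≤ |v₁ - v₂| ^ p := by
  have hu₁ : 0 < u₁ := hu₂.trans hu
  have hδ : 0 < u₁ - u₂ := sub_pos.2 hu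
  have hv₁_le : v₁ ≤ |v₁ - v₂| + v₂ := by linarith [le_abs_self (v₁ - v₂)]
  have hradon : v₁ ^ p / u₁ ^ (p - 1) ≤
      |v₁ - v₂| ^ p / (u₁ - u₂) ^ (p - 1) + v₂ ^ p / u₂ ^ (p - 1) :=
    calc v₁ ^ p / u₁ ^ (p - 1)
        ≤ (|v₁ - v₂| + v₂) ^ p / ((u₁ - u₂) + u₂) ^ (p - 1) := by
          rw [sub_add_cancel]; gcongr
      _ ≤ _ := radon_inequality hp (abs_nonneg _) hv₂ hδ hu₂
  calc jp p (u₁ - u₂) * (v₁ ^ p / u₁ ^ (p - 1) - v₂ ^ p / u₂ ^ (p - 1))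
      ≤ (u₁ - u₂) ^ (p - 1) * (|v₁ - v₂| ^ p / (u₁ - u₂) ^ (p - 1)) := by
        rw [jp_of_pos hδ]; gcongr; linarith
    _ = |v₁ - v₂| ^ p := mul_div_cancel₀ _ (rpow_pos_of_pos hδ _).ne'

lemma discrete_picone {p u₁ u₂ v₁ v₂ : ℝ} (hp : 1 ≤ p) (hu₁ : 0 < u₁) (hu₂ : 0 < u₂)
    (hv₁ : 0 ≤ v₁) (hv₂ : 0 ≤ v₂) :
    jp p (u₁ - u₂) * (v₁ ^ p / u₁ ^ (p - 1) - v₂ ^ p / u₂ ^ (p - 1)) ≤ |v₁ - v₂| ^ p := by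
  rcases lt_trichotomy u₁ u₂ with hu | rfl | hu
  · have := discrete_picone_of_lt hp hu₁ hu hv₂ hv₁
    rw [← neg_sub u₁, jp_neg, abs_sub_comm] at this
    linarith
  · simp [jp_zero, rpow_nonneg (abs_nonneg _)]
  · exact discrete_picone_of_lt hp hu₂ hu hv₁ hv₂

lemma discrete_picone_add {p a b c d : ℝ} (hp : 1 ≤ p) (ha : 0 < a) (hb : 0 < b) (hc : 0 < c)
    (hd : 0 < d) :
    jp p (c - d) * ((a ^ p - c ^ p) / c ^ (p - 1) - (b ^ p - d ^ p) / d ^ (p - 1)) ≤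
      jp p (a - b) * ((a ^ p - c ^ p) / a ^ (p - 1) - (b ^ p - d ^ p) / b ^ (p - 1)) := by
  have hself : ∀ x : ℝ, 0 < x → x ^ p / x ^ (p - 1) = x := fun x hx => by
    rw [rpow_sub_one hx.ne', div_div_cancel₀ (rpow_pos_of_pos hx p).ne']
  have hcd := discrete_picone hp hc hd ha.le hb.le
  have hab := discrete_picone hp ha hb hc.le hd.le
  rw [← jp_mul_self (by linarith) (c - d)] at hab
  rw [← jp_mul_self (by linarith) (a - b)] at hcd
  simp only [sub_div, hself a ha, hself b hb, hself c hc, hself d hd]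
  linarith

lemma jp_sub_mul_div_le {p a b c d ψ : ℝ} (hp : 1 ≤ p) (hb : 0 < b) (hc : 0 ≤ c) (hd : 0 < d)
    (hac : a ≤ c) (hdb : d ≤ b) (hψ : 0 ≤ ψ) :
    jp p (a - b) * (ψ / b ^ (p - 1)) ≤ jp p (c - d) * (ψ / d ^ (p - 1)) := by
  have hratio : (a - b) / b ≤ (c - d) / d := by
    rw [div_le_div_iff₀ hb hd]; nlinarith [mul_le_mul_of_nonneg_left hdb hc]
  simp only [← mul_div_assoc, mul_div_right_comm _ ψ, jp_div _ hb, jp_div _ hd]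
  exact mul_le_mul_of_nonneg_right (jp_monotone hp hratio) hψ

/-- a discrete inequality in the spirit of Picone's inequality,
with `j_p(t) = |t|^{p-2} t` and positive parts `φ₁ = (a^p - c^p)⁺`,
`φ₂ = (b^p - d^p)⁺`. -/
theorem jp_mul_trunc_div_le
    (p a b c d : ℝ) (hp : 2 ≤ p) (ha : 0 < a) (hb : 0 < b) (hc : 0 < c)
    (hd : 0 < d) :
    |c - d| ^ (p - 2) * (c - d) *
        (max (a ^ p - c ^ p) 0 / c ^ (p - 1) - max (b ^ p - d ^ p) 0 / d ^ (p - 1)) ≤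
      |a - b| ^ (p - 2) * (a - b) *
        (max (a ^ p - c ^ p) 0 / a ^ (p - 1) - max (b ^ p - d ^ p) 0 / b ^ (p - 1)) := by
  change jp p (c - d) * _ ≤ jp p (a - b) * _
  have hp1 : 1 ≤ p := by linarith
  have hp0 : 0 ≤ p := by linarith
  have trunc_of_le {x y : ℝ} (hx : 0 < x) (hxy : x ≤ y) : max (x ^ p - y ^ p) 0 = 0 :=
    max_eq_right (sub_nonpos.2 (rpow_le_rpow hx.le hxy hp0))
  have rpow_sub_nonneg {x y : ℝ} (hy : 0 < y) (hyx : y < x) : 0 ≤ x ^ p - y ^ p :=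
    sub_nonneg.2 (rpow_le_rpow hy.le hyx.le hp0)
  rcases le_or_gt a c with hac | hca <;> rcases le_or_gt b d with hbd | hdb
  · simp [trunc_of_le ha hac, trunc_of_le hb hbd]
  · rw [trunc_of_le ha hac, max_eq_left (rpow_sub_nonneg hd hdb)]
    simp only [zero_div, zero_sub, mul_neg, neg_le_neg_iff]
    exact jp_sub_mul_div_le hp1 hb hc.le hd hac hdb.le (rpow_sub_nonneg hd hdb)
  · rw [max_eq_left (rpow_sub_nonneg hc hca), trunc_of_le hb hbd]
    have := jp_sub_mul_div_le hp1 ha hd.le hc hbd hca.le (rpow_sub_nonneg hc hca)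
    rw [← neg_sub a, ← neg_sub c, jp_neg, jp_neg] at this
    simpa using this
  · rw [max_eq_left (rpow_sub_nonneg hc hca), max_eq_left (rpow_sub_nonneg hd hdb)]
    exact discrete_picone_add hp1 ha hb hc hd
end
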